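/- Let C be a class of finite-dimensional A-modules that is closed under direct sums and contains kernels of evaluation morphisms, and let M and N be modules in C such that dim Hom_A(M,X) = dim Hom_A(N,X) for every X in C. Then the evaluation morphism ev[M][N] : M ⊗_k Hom_A(M,N) → N is a split surjection; in particular, N is a direct summand of M^n, where n = dim Hom_A(M,N). -/

import Mathlib

/-!
Write `H = Hom_A(M, N)`, `T = M ⊗_k H ≅ M^n` and `K = ker ev`, which lies in `C`. Since
`Hom_A(X, -)` is left exact, the image of `Hom_A(X, ev) : Hom_A(X, T) → Hom_A(X, N)` has
dimension `dim Hom_A(X, T) - dim Hom_A(X, K)`. For `X = M` the map is onto (`f` is the image of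
`m ↦ m ⊗ f`); the hypothesis on `M` and `N`, applied to `M`, `N` and `K`, gives the same
dimensions for `X = N`, so `Hom_A(N, ev)` is onto as well and a preimage of `id_N` splits `ev`.
-/

open TensorProduct

/-- The evaluation morphism `ev[M][N] : M ⊗_k Hom_A(M,N) → N`, `m ⊗ f ↦ f m`.  It is
`A`-linear for the `A`-module structure on the tensor product coming from the `A`-action
on the first factor. -/
noncomputable def evMod (k : Type*) {A : Type*} [Field k] [Ring A] [Algebra k A]
    (M N : Type*) [AddCommGroup M] [Module k M] [Module A M] [IsScalarTower k A M]
    [AddCommGroup N] [Module k N] [Module A N] [IsScalarTower k A N] :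
    (M ⊗[k] (M →ₗ[A] N)) →ₗ[A] N where
  toFun := TensorProduct.lift (LinearMap.mk₂ k (fun m (f : M →ₗ[A] N) => f m)
    (fun m₁ m₂ f => map_add f m₁ m₂)
    (fun c m f => f.map_smul_of_tower c m)
    (fun m f g => rfl)
    (fun c m f => rfl))
  map_add' := map_add _
  map_smul' := fun a x => by
    induction x using TensorProduct.induction_on with
    | zero => simp
    | tmul m f => rw [TensorProduct.smul_tmul']; simp
    | add u v hu hv =>
      simp only [smul_add, map_add]
      exact congrArg₂ (· + ·) hu hv

open Module LinearMap

section HomSpaces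

variable (k : Type*) {A : Type*} [Field k] [Ring A] [Algebra k A]
  {Y Y' T Z : Type*} [AddCommGroup Y] [Module A Y] [AddCommGroup Y'] [Module A Y']
  [AddCommGroup T] [Module k T] [Module A T] [IsScalarTower k A T]
  [AddCommGroup Z] [Module k Z] [Module A Z] [IsScalarTower k A Z]

instance [Module k Y] [IsScalarTower k A Y] [FiniteDimensional k Y] [FiniteDimensional k T] :
    FiniteDimensional k (Y →ₗ[A] T) :=
  .of_injective (restrictScalarsₗ k A Y T k) (restrictScalars_injective k)

theorem finrank_linearMap_congr_right (e : T ≃ₗ[A] Z) :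
    finrank k (Y →ₗ[A] T) = finrank k (Y →ₗ[A] Z) :=
  (LinearEquiv.ofLinearMap (compRight k e.toLinearMap) (compRight k e.symm.toLinearMap)
    (by ext; simp) (by ext; simp)).finrank_eq

theorem finrank_linearMap_pi (n : ℕ) [FiniteDimensional k (Y →ₗ[A] T)] :
    finrank k (Y →ₗ[A] (Fin n → T)) = n * finrank k (Y →ₗ[A] T) := by
  rw [← (LinearEquiv.linearMapPi k).finrank_eq, finrank_pi_fintype]
  simp

theorem ker_compRight_eq_range (g : T →ₗ[A] Z) :
    ker (compRight k g : (Y →ₗ[A] T) →ₗ[k] _) = range (compRight k (ker g).subtype) := by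
  ext f
  constructor
  · intro hf
    refine ⟨f.codRestrict (ker g) fun y => ?_, rfl⟩
    exact congr($(mem_ker.mp hf) y)
  · rintro ⟨h, rfl⟩
    exact mem_ker.mpr (ext fun y => (h y).2)

theorem injective_compRight_of_injective {f : T →ₗ[A] Z} (hf : Function.Injective f) :
    Function.Injective (compRight k f : (Y →ₗ[A] T) →ₗ[k] _) :=
  fun _ _ h => ext fun y => hf congr($h y)

theorem finrank_range_compRight_add_finrank_ker (g : T →ₗ[A] Z)
    [FiniteDimensional k (Y →ₗ[A] T)] :
    finrank k (range (compRight k g : (Y →ₗ[A] T) →ₗ[k] _)) + finrank k (Y →ₗ[A] ker g) =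
      finrank k (Y →ₗ[A] T) := by
  rw [← finrank_range_add_finrank_ker (compRight k g), ker_compRight_eq_range,
    finrank_range_of_inj (injective_compRight_of_injective k (ker g).injective_subtype)]

theorem surjective_compRight_of_finrank_eq (g : T →ₗ[A] Z)
    [FiniteDimensional k (Y →ₗ[A] T)] [FiniteDimensional k (Y' →ₗ[A] T)]
    [FiniteDimensional k (Y' →ₗ[A] Z)]
    (hY : Function.Surjective (compRight k g : (Y →ₗ[A] T) →ₗ[k] _))
    (hT : finrank k (Y →ₗ[A] T) = finrank k (Y' →ₗ[A] T))
    (hZ : finrank k (Y →ₗ[A] Z) = finrank k (Y' →ₗ[A] Z))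
    (hK : finrank k (Y →ₗ[A] ker g) = finrank k (Y' →ₗ[A] ker g)) :
    Function.Surjective (compRight k g : (Y' →ₗ[A] T) →ₗ[k] _) := by
  rw [← range_eq_top] at hY ⊢
  apply Submodule.eq_top_of_finrank_eq
  have hrankY := finrank_range_compRight_add_finrank_ker k (Y := Y) g
  have hrankY' := finrank_range_compRight_add_finrank_ker k (Y := Y') g
  rw [hY, finrank_top] at hrankY
  omega

end HomSpaces

section Tensor

variable (k : Type*) {A : Type*} [Field k] [Ring A] [Algebra k A]
  (M : Type*) [AddCommGroup M] [Module k M] [Module A M] [IsScalarTower k A M]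
  {H : Type*} [AddCommGroup H] [Module k H]

noncomputable def tensorEquivPiOfBasis {ι : Type*} [Fintype ι] [DecidableEq ι]
    (b : Basis ι k H) : (M ⊗[k] H) ≃ₗ[A] (ι → M) :=
  AlgebraTensorModule.congr (.refl A M) b.repr ≪≫ₗ finsuppScalarRight k A M ι ≪≫ₗ
    Finsupp.linearEquivFunOnFinite A M ι

theorem finrank_linearMap_tensor {Y : Type*} [AddCommGroup Y] [Module A Y]
    [FiniteDimensional k H] [FiniteDimensional k (Y →ₗ[A] M)] :
    finrank k (Y →ₗ[A] M ⊗[k] H) = finrank k H * finrank k (Y →ₗ[A] M) := by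
  rw [finrank_linearMap_congr_right k (tensorEquivPiOfBasis k M (finBasis k H)),
    finrank_linearMap_pi]

end Tensor

theorem surjective_compRight_evMod (k : Type*) {A : Type*} [Field k] [Ring A] [Algebra k A]
    (M N : Type*) [AddCommGroup M] [Module k M] [Module A M] [IsScalarTower k A M]
    [AddCommGroup N] [Module k N] [Module A N] [IsScalarTower k A N] :
    Function.Surjective (compRight k (evMod k M N) :
      (M →ₗ[A] M ⊗[k] (M →ₗ[A] N)) →ₗ[k] _) := by
  intro f
  refine ⟨(AlgebraTensorModule.mk k A M (M →ₗ[A] N)).flip f, ?_⟩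
  ext m
  simp [evMod]

theorem ev_split_surjection_general (k A : Type*) [Field k] [Ring A] [Algebra k A]
    (ι : Type*) (V : ι → Type*)
    [∀ i, AddCommGroup (V i)] [∀ i, Module k (V i)] [∀ i, Module A (V i)]
    [∀ i, IsScalarTower k A (V i)] [∀ i, FiniteDimensional k (V i)]
    (hker : ∀ i j : ι, ∃ l : ι,
      Nonempty ((↥(LinearMap.ker (evMod (A := A) k (V i) (V j)))) ≃ₗ[A] V l))
    (i j : ι)
    (hdim : ∀ l : ι,
      Module.finrank k (V i →ₗ[A] V l) = Module.finrank k (V j →ₗ[A] V l)) :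
    (∃ s : V j →ₗ[A] (V i ⊗[k] (V i →ₗ[A] V j)),
      (evMod (A := A) k (V i) (V j)) ∘ₗ s = LinearMap.id) ∧
    (∃ (g : (Fin (Module.finrank k (V i →ₗ[A] V j)) → V i) →ₗ[A] V j)
       (s : V j →ₗ[A] (Fin (Module.finrank k (V i →ₗ[A] V j)) → V i)),
      g ∘ₗ s = LinearMap.id) := by
  obtain ⟨l, ⟨e⟩⟩ := hker i j
  have hsurj := surjective_compRight_of_finrank_eq k (Y' := V j) (evMod (A := A) k (V i) (V j))
    (surjective_compRight_evMod k (V i) (V j))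
    (by rw [finrank_linearMap_tensor, finrank_linearMap_tensor, hdim i]) (hdim j)
    (by rw [finrank_linearMap_congr_right k e, finrank_linearMap_congr_right k e, hdim l])
  obtain ⟨s, hs⟩ := hsurj LinearMap.id
  let E := tensorEquivPiOfBasis k (A := A) (V i) (finBasis k (V i →ₗ[A] V j))
  refine ⟨⟨s, hs⟩, evMod (A := A) k (V i) (V j) ∘ₗ E.symm.toLinearMap, E.toLinearMap ∘ₗ s, ?_⟩
  ext x
  simpa using congr($hs x)

/-- Let `C` be a class of finite-dimensional `A`-modules (encoded as a
family `V : ι → Type`) closed under direct sums and containing kernels of evaluation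
morphisms, and let `M = V i`, `N = V j` in `C` satisfy
`dim Hom_A(M,X) = dim Hom_A(N,X)` for every `X` in `C`.  Then the evaluation morphism
`ev[M][N] : M ⊗_k Hom_A(M,N) → N` is a split surjection; in particular `N` is a direct
summand of `M^n` with `n = dim Hom_A(M,N)`. -/
theorem ev_split_surjection (k A : Type*) [Field k] [Ring A] [Algebra k A]
    [FiniteDimensional k A]
    (ι : Type*) (V : ι → Type*)
    [∀ i, AddCommGroup (V i)] [∀ i, Module k (V i)] [∀ i, Module A (V i)]
    [∀ i, IsScalarTower k A (V i)] [∀ i, FiniteDimensional k (V i)]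
    (hds : ∀ i j : ι, ∃ l : ι, Nonempty ((V i × V j) ≃ₗ[A] V l))
    (hker : ∀ i j : ι, ∃ l : ι,
      Nonempty ((↥(LinearMap.ker (evMod (A := A) k (V i) (V j)))) ≃ₗ[A] V l))
    (i j : ι)
    (hdim : ∀ l : ι,
      Module.finrank k (V i →ₗ[A] V l) = Module.finrank k (V j →ₗ[A] V l)) :
    (∃ s : V j →ₗ[A] (V i ⊗[k] (V i →ₗ[A] V j)),
      (evMod (A := A) k (V i) (V j)) ∘ₗ s = LinearMap.id) ∧
    (∃ (g : (Fin (Module.finrank k (V i →ₗ[A] V j)) → V i) →ₗ[A] V j)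
       (s : V j →ₗ[A] (Fin (Module.finrank k (V i →ₗ[A] V j)) → V i)),
      g ∘ₗ s = LinearMap.id) :=
  ev_split_surjection_general k A ι V hker i j hdim
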